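/- arXiv:2205.07618 — 4 statements merged into one kernel-verified Lean document; each statement's English description precedes it below -/
import Mathlib

section
/- Let N ≥ 0 and Λ > 0 be real numbers. Then U(N + 1, Λ) ≥ U(N, Λ), and the inequality is strict if and only if N + 1 > Λ. -/
/-- The generalized log-likelihood ratio
`U(N, Λ) = sup_{θ ∈ [0,∞)} (θ·N − (exp(θ) − 1)·Λ)`. -/
noncomputable def cgiU (N Λ : ℝ) : ℝ :=
  sSup ((fun θ : ℝ => θ * N - (Real.exp θ - 1) * Λ) '' Set.Ici 0)

lemma cgi_nonempty (N Λ : ℝ) :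
    ((fun θ : ℝ => θ * N - (Real.exp θ - 1) * Λ) '' Set.Ici 0).Nonempty :=
  ⟨_, ⟨0, Set.mem_Ici.mpr le_rfl, rfl⟩⟩

lemma cgi_bound_le {N Λ : ℝ} (hN : 0 ≤ N) (hNΛ : N ≤ Λ) {θ : ℝ} (hθ : 0 ≤ θ) :
    θ * N - (Real.exp θ - 1) * Λ ≤ 0 := by
  have h := Real.add_one_le_exp θ
  nlinarith

lemma cgi_bound_gt {N Λ : ℝ} (hΛ : 0 < Λ) (h : Λ < N) (θ : ℝ) :
    θ * N - (Real.exp θ - 1) * Λ ≤ N * Real.log (N / Λ) - N + Λ := by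
  set t := Real.log (N / Λ) with ht
  have hNpos : 0 < N := hΛ.trans h
  have hexp : Real.exp t = N / Λ := Real.exp_log (by positivity)
  have hN : N = Λ * Real.exp t := by rw [hexp]; field_simp
  have h1 : (θ - t) + 1 ≤ Real.exp (θ - t) := Real.add_one_le_exp _
  have h2 : Real.exp θ = Real.exp t * Real.exp (θ - t) := by
    rw [← Real.exp_add]; ring_nf
  have key := mul_le_mul_of_nonneg_left h1
    (le_of_lt (mul_pos hΛ (Real.exp_pos t)))
  rw [h2, hN]
  nlinarith [key]

lemma cgi_bddAbove {N Λ : ℝ} (hN : 0 ≤ N) (hΛ : 0 < Λ) :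
    BddAbove ((fun θ : ℝ => θ * N - (Real.exp θ - 1) * Λ) '' Set.Ici 0) := by
  rcases le_or_gt N Λ with h | h
  · exact ⟨0, by rintro x ⟨θ, hθ, rfl⟩; exact cgi_bound_le hN h hθ⟩
  · exact ⟨N * Real.log (N / Λ) - N + Λ,
      by rintro x ⟨θ, hθ, rfl⟩; exact cgi_bound_gt hΛ h θ⟩

lemma cgiU_of_le {N Λ : ℝ} (hN : 0 ≤ N) (hΛ : 0 < Λ) (h : N ≤ Λ) : cgiU N Λ = 0 := by
  apply le_antisymm
  · exact csSup_le (cgi_nonempty N Λ) (by rintro x ⟨θ, hθ, rfl⟩; exact cgi_bound_le hN h hθ)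
  · apply le_csSup (cgi_bddAbove hN hΛ)
    exact ⟨0, Set.mem_Ici.mpr le_rfl, by simp⟩

lemma cgiU_of_gt {N Λ : ℝ} (hΛ : 0 < Λ) (h : Λ < N) :
    cgiU N Λ = N * Real.log (N / Λ) - N + Λ := by
  have hNpos : 0 < N := hΛ.trans h
  apply le_antisymm
  · exact csSup_le (cgi_nonempty N Λ) (by rintro x ⟨θ, hθ, rfl⟩; exact cgi_bound_gt hΛ h θ)
  · apply le_csSup (cgi_bddAbove hNpos.le hΛ)
    refine ⟨Real.log (N / Λ),
      Set.mem_Ici.mpr (Real.log_nonneg (by rw [le_div_iff₀ hΛ]; linarith)), ?_⟩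
    have he : Real.exp (Real.log (N / Λ)) = N / Λ := Real.exp_log (by positivity)
    simp only [he]
    field_simp
    ring

lemma cgi_pos {M Λ : ℝ} (hΛ : 0 < Λ) (h : Λ < M) :
    0 < M * Real.log (M / Λ) - M + Λ := by
  have hM : 0 < M := hΛ.trans h
  have h1 : Real.log (Λ / M) < Λ / M - 1 :=
    Real.log_lt_sub_one_of_pos (by positivity) (by
      intro hc
      rw [div_eq_one_iff_eq hM.ne'] at hc
      exact absurd hc h.ne)
  have h2 : Real.log (Λ / M) = Real.log Λ - Real.log M := Real.log_div hΛ.ne' hM.ne'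
  have h3 : Real.log (M / Λ) = Real.log M - Real.log Λ := Real.log_div hM.ne' hΛ.ne'
  rw [h2] at h1
  have h5 : M * (Λ / M) = Λ := by field_simp
  have hint := mul_lt_mul_of_pos_left h1 hM
  rw [h3]
  nlinarith [hint, h5]

theorem cgiU_increases_at_failure (N Λ : ℝ) (hN : 0 ≤ N) (hΛ : 0 < Λ) :
    cgiU (N + 1) Λ ≥ cgiU N Λ ∧ (cgiU N Λ < cgiU (N + 1) Λ ↔ N + 1 > Λ) := by
  rcases le_or_gt (N + 1) Λ with h1 | h1
  · have e1 : cgiU (N + 1) Λ = 0 := cgiU_of_le (by linarith) hΛ h1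
    have e2 : cgiU N Λ = 0 := cgiU_of_le hN hΛ (by linarith)
    constructor
    · rw [e1, e2]
    · constructor
      · intro hc; rw [e1, e2] at hc; exact absurd hc (lt_irrefl 0)
      · intro hc; exact absurd hc (not_lt.mpr h1)
  · have hstrict : cgiU N Λ < cgiU (N + 1) Λ := by
      rcases le_or_gt N Λ with h2 | h2
      · rw [cgiU_of_le hN hΛ h2, cgiU_of_gt hΛ h1]
        exact cgi_pos hΛ h1
      · have hNpos : 0 < N := hΛ.trans h2
        set a := Real.log (N / Λ) with ha
        have hapos : 0 < a := Real.log_pos (by rw [lt_div_iff₀ hΛ]; linarith)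
        have hmem : a * (N + 1) - (Real.exp a - 1) * Λ ∈
            ((fun θ : ℝ => θ * (N + 1) - (Real.exp θ - 1) * Λ) '' Set.Ici 0) :=
          ⟨a, Set.mem_Ici.mpr hapos.le, rfl⟩
        have hle := le_csSup (cgi_bddAbove (by linarith : (0:ℝ) ≤ N + 1) hΛ) hmem
        have hval : a * (N + 1) - (Real.exp a - 1) * Λ
            = (N * Real.log (N / Λ) - N + Λ) + a := by
          rw [ha, Real.exp_log (by positivity)]
          field_simp
          ring
        rw [cgiU_of_gt hΛ h2]
        calc N * Real.log (N / Λ) - N + Λ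
            < (N * Real.log (N / Λ) - N + Λ) + a := by linarith
          _ = a * (N + 1) - (Real.exp a - 1) * Λ := hval.symm
          _ ≤ cgiU (N + 1) Λ := hle
    exact ⟨hstrict.le, ⟨fun _ => h1, fun _ => hstrict⟩⟩
end

section
/- Let θ ≥ 0 and Λ > 0 be real numbers. Then U(exp(θ)·Λ, Λ) = (θ + exp(−θ) − 1)·exp(θ)·Λ. -/
theorem cgiU_at_expected_count (θ Λ : ℝ) (hθ : 0 ≤ θ) (hΛ : 0 < Λ) :
    cgiU (Real.exp θ * Λ) Λ = (θ + Real.exp (-θ) - 1) * Real.exp θ * Λ := by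
  have hmax : IsGreatest ((fun t : ℝ => t * (Real.exp θ * Λ) - (Real.exp t - 1) * Λ) '' Set.Ici 0)
      (θ * (Real.exp θ * Λ) - (Real.exp θ - 1) * Λ) := by
    constructor
    · exact ⟨θ, hθ, rfl⟩
    · rintro x ⟨t, ht, rfl⟩
      have key : Real.exp θ * (1 + (t - θ)) ≤ Real.exp t := by
        have := Real.add_one_le_exp (t - θ)
        calc Real.exp θ * (1 + (t - θ)) ≤ Real.exp θ * Real.exp (t - θ) := by
              nlinarith [Real.exp_pos θ]
          _ = Real.exp t := by rw [← Real.exp_add]; ring_nf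
      simp only
      nlinarith [mul_le_mul_of_nonneg_left key hΛ.le]
  have := hmax.csSup_eq
  unfold cgiU
  rw [this]
  have : Real.exp (-θ) * Real.exp θ = 1 := by
    rw [← Real.exp_add]; simp
  nlinarith [this]
end

section
/- Let θ > 0, θ₁ ≥ 0 with θ₁ ≠ θ and exp(θ₁)/exp(θ) < θ₁ + exp(−θ), let h > 0, and let I : [0,∞) → ℝ be a continuous, strictly increasing function with I(0) = 0 and I(t) → ∞ as t → ∞. Let t_CGI > 0 be the unique solution of (θ + exp(−θ) − 1)·I(t) = h and let t_BK > 0 be the unique solution of (θ₁ + exp(−θ) − exp(θ₁ − θ))·I(t) = h. Then t_CGI < t_BK. -/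
theorem cgi_arl_lt_bk_arl (θ θ₁ h : ℝ) (hθ : 0 < θ) (hθ₁ : 0 ≤ θ₁) (hne : θ₁ ≠ θ)
    (hcond : Real.exp θ₁ / Real.exp θ < θ₁ + Real.exp (-θ)) (hh : 0 < h)
    (I : ℝ → ℝ) (hcont : ContinuousOn I (Set.Ici 0))
    (hmono : StrictMonoOn I (Set.Ici 0)) (hI0 : I 0 = 0)
    (htop : Filter.Tendsto I Filter.atTop Filter.atTop)
    (tCGI tBK : ℝ) (htCGI : 0 < tCGI) (htBK : 0 < tBK)
    (heqCGI : (θ + Real.exp (-θ) - 1) * I tCGI = h)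
    (heqBK : (θ₁ + Real.exp (-θ) - Real.exp (θ₁ - θ)) * I tBK = h) :
    tCGI < tBK := by
  have hdiv : Real.exp (θ₁ - θ) = Real.exp θ₁ / Real.exp θ := by
    rw [Real.exp_sub]
  have hBKpos : 0 < θ₁ + Real.exp (-θ) - Real.exp (θ₁ - θ) := by
    rw [hdiv]; linarith
  have hexp : θ₁ - θ + 1 < Real.exp (θ₁ - θ) :=
    Real.add_one_lt_exp (by intro hc; apply hne; linarith)
  have hCGIgt : θ₁ + Real.exp (-θ) - Real.exp (θ₁ - θ) < θ + Real.exp (-θ) - 1 := by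
    linarith
  have hCGIpos : 0 < θ + Real.exp (-θ) - 1 := lt_trans hBKpos hCGIgt
  have hItCGI : I tCGI = h / (θ + Real.exp (-θ) - 1) := by
    field_simp; linarith [heqCGI]
  have hItBK : I tBK = h / (θ₁ + Real.exp (-θ) - Real.exp (θ₁ - θ)) := by
    field_simp; linarith [heqBK]
  have hIlt : I tCGI < I tBK := by
    rw [hItCGI, hItBK]
    exact div_lt_div_of_pos_left hh hBKpos hCGIgt
  by_contra hle
  push_neg at hle
  rcases eq_or_lt_of_le hle with heq | hlt
  · rw [heq] at hIlt; exact lt_irrefl _ hIlt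
  · exact absurd (hmono htBK.le htCGI.le hlt) (not_lt.mpr hIlt.le)
end

section
/- Let θ₁ > 0, let 0 ≤ a ≤ t ≤ b, and let N, Λ : ℝ → ℝ be functions such that Λ is nondecreasing on [0, b], N is nondecreasing on [0, b], and N is constant on [a, b]. Define BK(u) = sup_{s ∈ [0, u]} (θ₁·(N(u) − N(s)) − (exp(θ₁) − 1)·(Λ(u) − Λ(s))) for u ≥ 0. Then BK(t) ≤ BK(a). -/
theorem bk_cusum_no_increase_without_failure (θ₁ : ℝ) (hθ₁ : 0 < θ₁)
    (a t b : ℝ) (ha : 0 ≤ a) (hat : a ≤ t) (htb : t ≤ b)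
    (N Λ : ℝ → ℝ)
    (hΛmono : MonotoneOn Λ (Set.Icc 0 b))
    (hNmono : MonotoneOn N (Set.Icc 0 b))
    (hNconst : ∀ x ∈ Set.Icc a b, N x = N a)
    (BK : ℝ → ℝ)
    (hBK : ∀ u : ℝ, BK u =
      sSup ((fun s : ℝ =>
        θ₁ * (N u - N s) - (Real.exp θ₁ - 1) * (Λ u - Λ s)) '' Set.Icc 0 u)) :
    BK t ≤ BK a := by
  have hab : a ≤ b := hat.trans htb
  have ht0 : (0:ℝ) ≤ t := ha.trans hat
  have hc : 0 < Real.exp θ₁ - 1 := by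
    have := Real.add_one_le_exp θ₁
    linarith
  have haB : a ∈ Set.Icc (0:ℝ) b := ⟨ha, hab⟩
  have htB : t ∈ Set.Icc (0:ℝ) b := ⟨ht0, htb⟩
  have hNt : N t = N a := hNconst t ⟨hat, htb⟩
  set fa : ℝ → ℝ := fun s => θ₁ * (N a - N s) - (Real.exp θ₁ - 1) * (Λ a - Λ s) with hfa
  -- bounded above
  have hbdd : BddAbove (fa '' Set.Icc 0 a) := by
    refine ⟨θ₁ * (N a - N 0), ?_⟩
    rintro y ⟨s, hs, rfl⟩
    have hsB : s ∈ Set.Icc (0:ℝ) b := ⟨hs.1, hs.2.trans hab⟩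
    have h1 : N 0 ≤ N s := hNmono ⟨le_refl 0, ha.trans hab⟩ hsB hs.1
    have h2 : Λ s ≤ Λ a := hΛmono hsB haB hs.2
    show θ₁ * (N a - N s) - (Real.exp θ₁ - 1) * (Λ a - Λ s) ≤ θ₁ * (N a - N 0)
    nlinarith
  have hne : (fa '' Set.Icc 0 a).Nonempty := ⟨fa a, a, ⟨ha, le_refl a⟩, rfl⟩
  rw [hBK t, hBK a]
  refine csSup_le ⟨(fun s => θ₁ * (N t - N s) - (Real.exp θ₁ - 1) * (Λ t - Λ s)) 0,
    0, ⟨le_refl 0, ht0⟩, rfl⟩ ?_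
  rintro y ⟨s, hs, rfl⟩
  have hsB : s ∈ Set.Icc (0:ℝ) b := ⟨hs.1, hs.2.trans htb⟩
  have hΛat : Λ a ≤ Λ t := hΛmono haB htB hat
  rcases le_or_gt s a with hsa | has
  · have hmem : fa s ∈ fa '' Set.Icc 0 a := ⟨s, ⟨hs.1, hsa⟩, rfl⟩
    have hle : θ₁ * (N t - N s) - (Real.exp θ₁ - 1) * (Λ t - Λ s) ≤ fa s := by
      rw [hNt]; show _ ≤ θ₁ * (N a - N s) - (Real.exp θ₁ - 1) * (Λ a - Λ s); nlinarith
    exact hle.trans (le_csSup hbdd hmem)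
  · have hNs : N s = N a := hNconst s ⟨has.le, hsB.2⟩
    have hΛst : Λ s ≤ Λ t := hΛmono hsB htB hs.2
    have hmem : fa a ∈ fa '' Set.Icc 0 a := ⟨a, ⟨ha, le_refl a⟩, rfl⟩
    have hle : θ₁ * (N t - N s) - (Real.exp θ₁ - 1) * (Λ t - Λ s) ≤ fa a := by
      rw [hNt, hNs]; show _ ≤ θ₁ * (N a - N a) - (Real.exp θ₁ - 1) * (Λ a - Λ a); nlinarith
    exact hle.trans (le_csSup hbdd hmem)
end
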